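/- arXiv:1601.07760 — 2 statements merged into one kernel-verified Lean document; each statement's English description precedes it below -/
import Mathlib

section
/- For a quaternionic n×n matrix M, Sdet(M) = 0 if and only if M has no inverse in Mat(n, ℍ) (i.e., there is no quaternionic matrix N with MN = NM = I_n). -/
open scoped Quaternion

/-- The simplex part of a quaternion `x = a + j·b`: the complex number `a = x₀ + x₁·i`. -/
noncomputable def qSimplex (x : ℍ[ℝ]) : ℂ := ⟨x.re, x.imI⟩

/-- The perplex part of a quaternion `x = a + j·b`: the complex number `b = x₂ − x₃·i`. -/
noncomputable def qPerplex (x : ℍ[ℝ]) : ℂ := ⟨x.imJ, -x.imK⟩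

/-- The simplex part of a quaternionic matrix. -/
noncomputable def matSimplex {α β : Type*} (M : Matrix α β ℍ[ℝ]) : Matrix α β ℂ :=
  Matrix.of fun r s => qSimplex (M r s)

/-- The perplex part of a quaternionic matrix. -/
noncomputable def matPerplex {α β : Type*} (M : Matrix α β ℍ[ℝ]) : Matrix α β ℂ :=
  Matrix.of fun r s => qPerplex (M r s)

/-- The complex-block representation `ψ(M) = [[Mˢ, −conj(Mᵖ)], [Mᵖ, conj(Mˢ)]]`
of a quaternionic matrix `M = Mˢ + j·Mᵖ`. -/
noncomputable def psi {α β : Type*} (M : Matrix α β ℍ[ℝ]) : Matrix (α ⊕ α) (β ⊕ β) ℂ :=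
  Matrix.fromBlocks (matSimplex M) (-(matPerplex M).map (starRingEnd ℂ))
    (matPerplex M) ((matSimplex M).map (starRingEnd ℂ))

/-- The Study determinant of a square quaternionic matrix: `Sdet(M) = det(ψ(M))`. -/
noncomputable def Sdet {α : Type*} [Fintype α] [DecidableEq α] (M : Matrix α α ℍ[ℝ]) : ℂ :=
  (psi M).det

/-!
The map `psi` is injective and multiplicative with `psi 1 = 1`, so an invertible `M` has
invertible `psi M`, i.e. `Sdet M ≠ 0`. Conversely, if `psi M` is invertible, then `N ↦ N * M`
is injective on quaternionic matrices (apply `psi` and cancel `psi M`). The ring of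
quaternionic `n × n` matrices is finite-dimensional over `ℝ`, hence Artinian, and in an
Artinian ring a right-regular element is a unit.
-/

open Matrix

lemma qSimplex_mul (x y : ℍ[ℝ]) :
    qSimplex (x * y) = qSimplex x * qSimplex y - starRingEnd ℂ (qPerplex x) * qPerplex y := by
  apply Complex.ext <;> simp only [qSimplex, qPerplex, Quaternion.re_mul,
    Quaternion.imI_mul, Complex.sub_re, Complex.sub_im, Complex.mul_re, Complex.mul_im,
    Complex.conj_re, Complex.conj_im] <;> ring

lemma qPerplex_mul (x y : ℍ[ℝ]) :
    qPerplex (x * y) = starRingEnd ℂ (qSimplex x) * qPerplex y + qPerplex x * qSimplex y := by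
  apply Complex.ext <;> simp only [qSimplex, qPerplex, Quaternion.imJ_mul,
    Quaternion.imK_mul, Complex.add_re, Complex.add_im, Complex.mul_re, Complex.mul_im,
    Complex.conj_re, Complex.conj_im] <;> ring

noncomputable def qSimplexAddHom : ℍ[ℝ] →+ ℂ :=
  AddMonoidHom.mk' qSimplex fun x y => by apply Complex.ext <;> simp [qSimplex]

noncomputable def qPerplexAddHom : ℍ[ℝ] →+ ℂ :=
  AddMonoidHom.mk' qPerplex fun x y => by
    apply Complex.ext <;> simp only [qPerplex, Quaternion.imJ_add, Quaternion.imK_add,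
      Complex.add_re, Complex.add_im]
    ring

section Rectangular

variable {l m n : Type*}

lemma psi_injective : Function.Injective (psi : Matrix m n ℍ[ℝ] → _) := by
  intro M N h
  ext r s : 1
  have hS : qSimplex (M r s) = qSimplex (N r s) := congr_fun₂ h (.inl r) (.inl s)
  have hP : qPerplex (M r s) = qPerplex (N r s) := congr_fun₂ h (.inr r) (.inl s)
  simp only [qSimplex, qPerplex, Complex.mk.injEq, neg_inj] at hS hP
  ext
  exacts [hS.1, hS.2, hP.1, hP.2]

variable [Fintype m]

lemma matSimplex_mul (M : Matrix l m ℍ[ℝ]) (N : Matrix m n ℍ[ℝ]) :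
    matSimplex (M * N) =
      matSimplex M * matSimplex N - (matPerplex M).map (starRingEnd ℂ) * matPerplex N := by
  ext r s
  change qSimplexAddHom (∑ k, M r k * N k s) = _
  simp only [map_sum, Matrix.sub_apply, mul_apply, map_apply, matSimplex, matPerplex, of_apply,
    ← Finset.sum_sub_distrib]
  exact Finset.sum_congr rfl fun k _ => qSimplex_mul _ _

lemma matPerplex_mul (M : Matrix l m ℍ[ℝ]) (N : Matrix m n ℍ[ℝ]) :
    matPerplex (M * N) =
      (matSimplex M).map (starRingEnd ℂ) * matPerplex N + matPerplex M * matSimplex N := by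
  ext r s
  change qPerplexAddHom (∑ k, M r k * N k s) = _
  simp only [map_sum, Matrix.add_apply, mul_apply, map_apply, matSimplex, matPerplex, of_apply,
    ← Finset.sum_add_distrib]
  exact Finset.sum_congr rfl fun k _ => qPerplex_mul _ _

lemma psi_mul (M : Matrix l m ℍ[ℝ]) (N : Matrix m n ℍ[ℝ]) : psi (M * N) = psi M * psi N := by
  have hadd := map_add (starRingEnd ℂ)
  have hsub := map_sub (starRingEnd ℂ)
  simp only [psi, fromBlocks_multiply, matSimplex_mul, matPerplex_mul, Matrix.map_sub _ hsub,
    Matrix.map_add _ hadd, Matrix.map_mul, Matrix.map_map, Function.comp_def,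
    Complex.conj_conj, Matrix.map_id', Matrix.neg_mul, Matrix.mul_neg, fromBlocks_inj]
  refine ⟨?_, ?_, ?_, ?_⟩ <;> abel

end Rectangular

section Square

variable {n : Type*} [DecidableEq n]

lemma matSimplex_one : matSimplex (1 : Matrix n n ℍ[ℝ]) = 1 := by
  ext r s
  by_cases h : r = s <;> simp [matSimplex, qSimplex, one_apply, h, Complex.ext_iff]

lemma matPerplex_one : matPerplex (1 : Matrix n n ℍ[ℝ]) = 0 := by
  ext r s
  by_cases h : r = s <;> simp [matPerplex, qPerplex, one_apply, h, Complex.ext_iff]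

lemma psi_one : psi (1 : Matrix n n ℍ[ℝ]) = 1 := by
  simp [psi, matSimplex_one, matPerplex_one]

variable [Fintype n]

noncomputable def psiMonoidHom : Matrix n n ℍ[ℝ] →* Matrix (n ⊕ n) (n ⊕ n) ℂ where
  toFun := psi
  map_one' := psi_one
  map_mul' := psi_mul

lemma isUnit_psi_iff {M : Matrix n n ℍ[ℝ]} : IsUnit (psi M) ↔ IsUnit M := by
  refine ⟨fun h => ?_, fun h => h.map psiMonoidHom⟩
  refine IsArtinianRing.isUnit_iff_isRightRegular.mpr fun N₁ N₂ hN => psi_injective ?_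
  have hψ : psi N₁ * psi M = psi N₂ * psi M := by simpa only [psi_mul] using congrArg psi hN
  exact h.mul_left_inj.mp hψ

end Square

theorem sdet_eq_zero_iff_not_invertible {n : ℕ} (M : Matrix (Fin n) (Fin n) ℍ[ℝ]) :
    Sdet M = 0 ↔ ¬ ∃ N : Matrix (Fin n) (Fin n) ℍ[ℝ], M * N = 1 ∧ N * M = 1 := by
  rw [Sdet, ← not_iff_not, not_not, ← ne_eq, ← isUnit_iff_ne_zero, ← Matrix.isUnit_iff_isUnit_det,
    isUnit_psi_iff, isUnit_iff_exists]
end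

section
/- Let σ be a fixed-point-free involution on a finite set of size 2m and let J_0 be its 2m×2m permutation matrix, regarded as a quaternionic matrix (so (J_0)_{ef} = 1 if f = σ(e) and 0 otherwise, with σ(e) ≠ e and σ(σ(e)) = e for all e). Then for every quaternion t, Sdet(I_{2m} + t·J_0) = |1 − t²|^{2m}. -/
open scoped Quaternion

/-!
Listing each orbit `{x, σ x}` of `σ` as `x < σ x` reindexes `1 + t • J₀` as the Kronecker product
`!![1, t; t, 1] ⊗ₖ 1ₘ`. Up to a permutation of indices `ψ` commutes with tensoring by an identity
matrix, so `Sdet (A ⊗ₖ 1ₘ) = Sdet A ^ m`, and a `4 × 4` determinant computation gives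
`Sdet !![1, t; t, 1] = (1 + |t|²)² - 4 (Re t)² = |1 - t²|²`.
-/

open Matrix
open scoped Kronecker

section Pairing

variable {α : Type*} [LinearOrder α] {σ : α → α}

def involutionPairing (hfix : ∀ x, σ x ≠ x) (hσ : Function.Involutive σ) :
    Fin 2 × {x // x < σ x} ≃ α where
  toFun p := ![p.2.1, σ p.2.1] p.1
  invFun x :=
    if h : x < σ x then (0, ⟨x, h⟩)
    else (1, ⟨σ x, by rw [hσ]; exact lt_of_le_of_ne (not_lt.1 h) (hfix x)⟩)
  left_inv := by
    rintro ⟨i, x, hx⟩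
    fin_cases i
    · simp [hx]
    · simp [hσ x, not_lt.2 hx.le]
  right_inv x := by
    by_cases h : x < σ x <;> simp [h, hσ x]

lemma involutionPairing_rev (hfix : ∀ x, σ x ≠ x) (hσ : Function.Involutive σ)
    (i : Fin 2) (x : {x // x < σ x}) :
    σ (involutionPairing hfix hσ (i, x)) = involutionPairing hfix hσ (i.rev, x) := by
  fin_cases i <;> simp [involutionPairing, hσ x]

lemma submatrix_involutionPairing {R : Type*} [MulZeroOneClass R] [DecidableEq α]
    (hfix : ∀ x, σ x ≠ x) (hσ : Function.Involutive σ) :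
    (of fun x y => if y = σ x then (1 : R) else 0).submatrix (involutionPairing hfix hσ)
        (involutionPairing hfix hσ) =
      !![0, 1; 1, 0] ⊗ₖ (1 : Matrix {x // x < σ x} {x // x < σ x} R) := by
  ext ⟨i, x⟩ ⟨j, y⟩
  simp only [submatrix_apply, of_apply, kroneckerMap_apply, involutionPairing_rev hfix hσ,
    Equiv.apply_eq_iff_eq]
  fin_cases i <;> fin_cases j <;> simp [Prod.ext_iff, one_apply, eq_comm]

lemma card_eq_two_mul_card_lt_involution [Fintype α] (hfix : ∀ x, σ x ≠ x)
    (hσ : Function.Involutive σ) : Fintype.card α = 2 * Fintype.card {x // x < σ x} := by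
  rw [← Fintype.card_congr (involutionPairing hfix hσ), Fintype.card_prod, Fintype.card_fin]

end Pairing

@[simp] lemma qSimplex_zero : qSimplex 0 = 0 := by
  simp [qSimplex, Complex.ext_iff]

@[simp] lemma qSimplex_one : qSimplex 1 = 1 := by
  simp [qSimplex, Complex.ext_iff]

@[simp] lemma qPerplex_zero : qPerplex 0 = 0 := by
  simp [qPerplex, Complex.ext_iff]

@[simp] lemma qPerplex_one : qPerplex 1 = 0 := by
  simp [qPerplex, Complex.ext_iff]

lemma psi_submatrix {α β γ δ : Type*} (M : Matrix α β ℍ[ℝ]) (f : γ → α) (g : δ → β) :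
    psi (M.submatrix f g) = (psi M).submatrix (Sum.map f f) (Sum.map g g) := by
  ext (i | i) (j | j) <;> rfl

lemma Sdet_submatrix_equiv {α β : Type*} [Fintype α] [DecidableEq α] [Fintype β] [DecidableEq β]
    (M : Matrix α α ℍ[ℝ]) (e : β ≃ α) : Sdet (M.submatrix e e) = Sdet M := by
  rw [Sdet, psi_submatrix]
  exact det_submatrix_equiv_self (e.sumCongr e) (psi M)

lemma psi_kronecker_one {α β γ : Type*} [DecidableEq γ] (A : Matrix α β ℍ[ℝ]) :
    psi (A ⊗ₖ (1 : Matrix γ γ ℍ[ℝ])) =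
      (psi A ⊗ₖ (1 : Matrix γ γ ℂ)).submatrix (Equiv.sumProdDistrib α α γ).symm
        (Equiv.sumProdDistrib β β γ).symm := by
  ext (⟨i, k⟩ | ⟨i, k⟩) (⟨j, l⟩ | ⟨j, l⟩) <;>
    by_cases hkl : k = l <;> simp [psi, matSimplex, matPerplex, one_apply, hkl]

lemma Sdet_kronecker_one {α γ : Type*} [Fintype α] [DecidableEq α] [Fintype γ] [DecidableEq γ]
    (A : Matrix α α ℍ[ℝ]) : Sdet (A ⊗ₖ (1 : Matrix γ γ ℍ[ℝ])) = Sdet A ^ Fintype.card γ := by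
  rw [Sdet, psi_kronecker_one, det_submatrix_equiv_self, det_kronecker, det_one, one_pow, mul_one,
    Sdet]

lemma det_fin_four_one_add_swap_blocks {R : Type*} [CommRing R] (a b c d : R) :
    !![1, a, 0, -c; a, 1, -c, 0; 0, b, 1, d; b, 0, d, 1].det =
      (1 + a * d + b * c) ^ 2 - (a + d) ^ 2 := by
  simp [det_succ_row_zero, Fin.sum_univ_succ, Fin.succAbove]
  ring

lemma Sdet_one_add_smul_swap (t : ℍ[ℝ]) : Sdet !![1, t; t, 1] = ((‖1 - t ^ 2‖ ^ 2 : ℝ) : ℂ) := by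
  set a := qSimplex t
  set b := qPerplex t
  have hpsi : reindex finSumFinEquiv finSumFinEquiv (psi !![1, t; t, 1]) =
      !![1, a, 0, -(starRingEnd ℂ) b; a, 1, -(starRingEnd ℂ) b, 0;
        0, b, 1, (starRingEnd ℂ) a; b, 0, (starRingEnd ℂ) a, 1] := by
    have hidx (i : Fin 4) : (finSumFinEquiv.symm i : Fin 2 ⊕ Fin 2) =
        ![.inl 0, .inl 1, .inr 0, .inr 1] i := by
      fin_cases i <;> rfl
    ext i j
    fin_cases i <;> fin_cases j <;> simp [psi, matSimplex, matPerplex, hidx, a, b]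
  rw [Sdet, ← det_reindex_self finSumFinEquiv, hpsi, det_fin_four_one_add_swap_blocks, sq ‖_‖,
    ← Quaternion.normSq_eq_norm_mul_self]
  apply Complex.ext <;>
    simp [a, b, qSimplex, qPerplex, Quaternion.normSq_def', sq] <;> ring

theorem sdet_one_add_smul_involution {m : ℕ} (σ : Fin (2 * m) → Fin (2 * m))
    (hfix : ∀ e, σ e ≠ e) (hinv : ∀ e, σ (σ e) = e) (t : ℍ[ℝ]) :
    Sdet (1 + t • (Matrix.of fun e f => if f = σ e then (1 : ℍ[ℝ]) else 0)) =
      ((‖1 - t ^ 2‖ ^ (2 * m) : ℝ) : ℂ) := by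
  have hcard : Fintype.card {e // e < σ e} = m := by
    have := card_eq_two_mul_card_lt_involution hfix hinv
    rw [Fintype.card_fin] at this
    omega
  have hswap : (1 : Matrix (Fin 2) (Fin 2) ℍ[ℝ]) + t • !![0, 1; 1, 0] = !![1, t; t, 1] := by
    ext i j : 1
    fin_cases i <;> fin_cases j <;> simp
  have hblocks : (1 + t • (Matrix.of fun e f => if f = σ e then (1 : ℍ[ℝ]) else 0)).submatrix
        (involutionPairing hfix hinv) (involutionPairing hfix hinv) =
      !![1, t; t, 1] ⊗ₖ (1 : Matrix {e // e < σ e} {e // e < σ e} ℍ[ℝ]) := by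
    simp only [submatrix_add, submatrix_smul, Pi.add_apply, Pi.smul_apply, submatrix_one_equiv]
    rw [submatrix_involutionPairing hfix hinv, ← smul_kronecker, ← one_kronecker_one,
      ← add_kronecker, hswap]
  rw [← Sdet_submatrix_equiv _ (involutionPairing hfix hinv), hblocks, Sdet_kronecker_one,
    Sdet_one_add_smul_swap, hcard]
  push_cast
  ring
end
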